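/- Let M ≥ 1 be an integer, let t_1 < t_2 < … < t_M be integers with t_1 ≥ 1, let ε be a real number with 0 < ε ≤ t_1, and set K = t_1·t_2···t_M. For r = (r_1, …, r_M) ∈ ℝ^M, let W(r) = ⋃_{m=1}^M [(t_m·ℤ + r_m)/K + (−ε/(2K), ε/(2K))] and let μ(r) denote the Lebesgue measure of [0,1) \ W(r). Then (1/K^M) ∫_{[0,K)^M} μ(r) dr = ∏_{m=1}^M (1 − ε/t_m). -/

import Mathlib

/-!
For fixed `x`, the condition `x ∉ W(r)` says that every coordinate `r m` avoids the
`ε/2`-neighbourhood of `K x + t m ℤ`, so the set of such `r` in the box `[0, K)^M` is a product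
of one-dimensional sets. Since `t m` divides `K`, the interval `[0, K)` consists of `K / t m` full
periods, each meeting that neighbourhood in a set of length `ε`; so the `m`-th factor has measure
`K (1 - ε / t m)`, independently of `x`. Exchanging the integrals over `r` and `x` (Tonelli for
the set `{(r, x) | x ∉ W(r)}`) gives the formula.
-/

open MeasureTheory Filter Set

/-- The union `⋃_m (t_m·ℤ + r_m)/K + (−ε/(2K), ε/(2K))`, where `K = t_1⋯t_M`. -/
def covUnion (M : ℕ) (t : Fin M → ℕ) (ε : ℝ) (r : Fin M → ℝ) : Set ℝ :=
  ⋃ m : Fin M, {x : ℝ | ∃ a : ℤ,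
    |x - ((t m : ℝ) * (a : ℝ) + r m) / (∏ m' : Fin M, (t m' : ℝ))| <
      ε / (2 * ∏ m' : Fin M, (t m' : ℝ))}

theorem integral_toReal_measure_prodMk_preimage {α β : Type*} [MeasurableSpace α]
    [MeasurableSpace β] (μ : Measure α) (ν : Measure β) [SFinite μ] [IsFiniteMeasure ν]
    {E : Set (α × β)} (hE : MeasurableSet E) :
    ∫ a, (ν (Prod.mk a ⁻¹' E)).toReal ∂μ = (∫⁻ b, μ ((·, b) ⁻¹' E) ∂ν).toReal := by
  rw [integral_toReal (measurable_measure_prodMk_left hE).aemeasurable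
    (ae_of_all _ fun _ => measure_lt_top _ _), ← Measure.prod_apply hE,
    Measure.prod_apply_symm hE]

section Periodic

variable {T : ℝ} {A : Set ℝ}

theorem volume_inter_Ioc_add_eq (hT : 0 < T) (hA : MeasurableSet A)
    (hper : ∀ x, x + T ∈ A ↔ x ∈ A) (a b : ℝ) :
    volume (A ∩ Ioc a (a + T)) = volume (A ∩ Ioc b (b + T)) := by
  have : VAddInvariantMeasure (AddSubgroup.zmultiples T) ℝ volume :=
    ⟨fun g s _ => measure_preimage_add _ _ _⟩
  have hper' : Function.Periodic (· ∈ A) T := fun x => propext (hper x)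
  refine (isAddFundamentalDomain_Ioc hT a).measure_set_eq (isAddFundamentalDomain_Ioc hT b) hA
    fun g => ?_
  ext x
  exact (hper'.map_vadd_zmultiples g x).to_iff

theorem volume_inter_Ioc_natCast_mul (hT : 0 < T) (hA : MeasurableSet A)
    (hper : ∀ x, x + T ∈ A ↔ x ∈ A) (n : ℕ) :
    volume (A ∩ Ioc 0 (n * T)) = n * volume (A ∩ Ioc 0 T) := by
  induction n with
  | zero => simp
  | succ n ih =>
    have hnT : 0 ≤ (n : ℝ) * T := by positivity
    rw [Nat.cast_succ, add_mul, one_mul, ← Ioc_union_Ioc_eq_Ioc hnT (by linarith),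
      inter_union_distrib_left, measure_union ?_ (hA.inter measurableSet_Ioc), ih,
      volume_inter_Ioc_add_eq hT hA hper _ 0, zero_add]
    · push_cast; ring
    exact (Ioc_disjoint_Ioc_of_le le_rfl).mono inter_subset_right inter_subset_right

end Periodic

def periodicBall (T c δ : ℝ) : Set ℝ := {s | ∃ a : ℤ, |s + a * T - c| < δ}

section PeriodicBall

variable {T c δ : ℝ}

theorem isOpen_periodicBall (T c δ : ℝ) : IsOpen (periodicBall T c δ) := by
  simp only [periodicBall, ofPred_exists]
  exact isOpen_iUnion fun a => isOpen_lt (by fun_prop) continuous_const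

theorem add_mem_periodicBall_iff {s : ℝ} :
    s + T ∈ periodicBall T c δ ↔ s ∈ periodicBall T c δ := by
  constructor
  · rintro ⟨a, ha⟩
    exact ⟨a + 1, by convert ha using 3; push_cast; ring⟩
  · rintro ⟨a, ha⟩
    exact ⟨a - 1, by convert ha using 3; push_cast; ring⟩

theorem Ioc_inter_periodicBall (hT : 0 < T) (hδT : 2 * δ ≤ T) :
    Ioc (c - T / 2) (c - T / 2 + T) ∩ periodicBall T c δ = Ioo (c - δ) (c + δ) := by
  ext s
  constructor
  · rintro ⟨⟨hs₁, hs₂⟩, a, ha⟩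
    obtain rfl : a = 0 := by
      by_contra ha₀
      have hT_le : T ≤ |a * T| := by
        rw [abs_mul, abs_of_pos hT]
        exact le_mul_of_one_le_left hT.le (by exact_mod_cast Int.one_le_abs ha₀)
      have hcs : |c - s| ≤ T / 2 := abs_le.2 ⟨by linarith, by linarith⟩
      have := abs_sub_abs_le_abs_sub (a * T) (c - s)
      rw [show a * T - (c - s) = s + a * T - c by ring] at this
      linarith
    rw [Int.cast_zero, zero_mul, add_zero, abs_lt] at ha
    constructor <;> linarith
  · rintro ⟨hs₁, hs₂⟩
    refine ⟨⟨by linarith, by linarith⟩, 0, ?_⟩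
    rw [Int.cast_zero, zero_mul, add_zero, abs_lt]
    constructor <;> linarith

theorem volume_periodicBall_compl_inter_Ioc (hT : 0 < T) (hδ : 0 ≤ δ) (hδT : 2 * δ ≤ T) :
    volume ((periodicBall T c δ)ᶜ ∩ Ioc 0 T) = ENNReal.ofReal (T - 2 * δ) := by
  have hB := (isOpen_periodicBall T c δ).measurableSet
  have hshift := volume_inter_Ioc_add_eq hT hB.compl
    (fun _ => not_congr add_mem_periodicBall_iff) 0 (c - T / 2)
  rw [zero_add] at hshift
  rw [hshift, ← sdiff_eq_compl_inter, ← sdiff_self_inter,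
    Ioc_inter_periodicBall hT hδT, measure_sdiff ?_ nullMeasurableSet_Ioo measure_Ioo_lt_top.ne,
    Real.volume_Ioc, Real.volume_Ioo, ← ENNReal.ofReal_sub _ (by linarith)]
  · congr 1; ring
  · exact Ioo_subset_Ioc_self.trans (Ioc_subset_Ioc (by linarith) (by linarith))

theorem volume_Ico_diff_periodicBall (hT : 0 < T) (hδ : 0 ≤ δ) (hδT : 2 * δ ≤ T) (n : ℕ) :
    volume (Ico 0 (n * T) \ periodicBall T c δ) = ENNReal.ofReal (n * (T - 2 * δ)) := by
  have hB := (isOpen_periodicBall T c δ).measurableSet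
  rw [sdiff_eq_compl_inter, measure_congr ((ae_eq_refl _).inter Ico_ae_eq_Ioc),
    volume_inter_Ioc_natCast_mul hT hB.compl (fun _ => not_congr add_mem_periodicBall_iff),
    volume_periodicBall_compl_inter_Ioc hT hδ hδT, ENNReal.ofReal_mul (Nat.cast_nonneg n),
    ENNReal.ofReal_natCast]

end PeriodicBall

section CovUnion

variable {M : ℕ} {t : Fin M → ℕ} {ε : ℝ}

theorem isOpen_setOf_mem_covUnion :
    IsOpen {p : (Fin M → ℝ) × ℝ | p.2 ∈ covUnion M t ε p.1} := by
  simp only [covUnion, mem_iUnion, mem_ofPred_eq, ofPred_exists]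
  exact isOpen_iUnion fun m => isOpen_iUnion fun a => isOpen_lt (by fun_prop) continuous_const

theorem mem_covUnion_iff (hK : 0 < ∏ m, (t m : ℝ)) (r : Fin M → ℝ) (x : ℝ) :
    x ∈ covUnion M t ε r ↔
      ∃ m, r m ∈ periodicBall (t m) ((∏ m, (t m : ℝ)) * x) (ε / 2) := by
  simp only [covUnion, periodicBall, mem_iUnion, mem_ofPred_eq]
  refine exists_congr fun m => exists_congr fun a => ?_
  rw [show x - ((t m : ℝ) * a + r m) / (∏ m, (t m : ℝ))
      = -(r m + a * t m - (∏ m, (t m : ℝ)) * x) / ∏ m, (t m : ℝ) by field_simp; ring,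
    abs_div, abs_neg, abs_of_pos hK, ← div_div, div_lt_div_iff_of_pos_right hK]

theorem volume_setOf_notMem_covUnion_inter_pi (ht : ∀ m, 0 < t m) (hε : 0 ≤ ε)
    (hεt : ∀ m, ε ≤ (t m : ℝ)) (x : ℝ) :
    volume ({r | x ∉ covUnion M t ε r} ∩ univ.pi fun _ => Ico 0 (∏ m, (t m : ℝ))) =
      ∏ m, ENNReal.ofReal ((∏ m, (t m : ℝ)) * (1 - ε / t m)) := by
  set K := ∏ m, (t m : ℝ)
  have htR : ∀ m, (0 : ℝ) < t m := fun m => Nat.cast_pos.2 (ht m)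
  have hK : 0 < K := Finset.prod_pos fun m _ => htR m
  have hslice : {r | x ∉ covUnion M t ε r} =
      univ.pi fun m => (periodicBall (t m) (K * x) (ε / 2))ᶜ := by
    ext r; simp [mem_covUnion_iff hK, K]
  have hK_eq : ∀ m, K = ((∏ m' ∈ Finset.univ.erase m, t m' : ℕ) : ℝ) * t m := fun m => by
    push_cast; exact (Finset.prod_erase_mul _ _ (Finset.mem_univ m)).symm
  rw [hslice, ← pi_inter_distrib, volume_pi_pi]
  refine Finset.prod_congr rfl fun m _ => ?_
  rw [← sdiff_eq_compl_inter, hK_eq m,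
    volume_Ico_diff_periodicBall (htR m) (by linarith) (by linarith [hεt m]),
    mul_assoc, mul_one_sub, mul_div_cancel₀ _ (htR m).ne']
  congr 2
  ring

end CovUnion

theorem stmt11_general (M : ℕ) (t : Fin M → ℕ) (ht1 : ∀ m, 1 ≤ t m)
    (ε : ℝ) (hε : 0 < ε) (hεt : ∀ m, ε ≤ (t m : ℝ)) :
    (1 / (∏ m : Fin M, (t m : ℝ)) ^ M) *
      ∫ r : Fin M → ℝ in
        Set.univ.pi (fun _ : Fin M => Set.Ico (0:ℝ) (∏ m : Fin M, (t m : ℝ))),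
        (volume (Set.Ico (0:ℝ) 1 \ covUnion M t ε r)).toReal =
      ∏ m : Fin M, (1 - ε / (t m : ℝ)) := by
  set K := ∏ m, (t m : ℝ)
  have hK : 0 < K := Finset.prod_pos fun m _ => Nat.cast_pos.2 (ht1 m)
  set box : Set (Fin M → ℝ) := univ.pi fun _ => Ico 0 K
  set E := {p : (Fin M → ℝ) × ℝ | p.2 ∈ covUnion M t ε p.1}ᶜ
  have hE : MeasurableSet E := isOpen_setOf_mem_covUnion.measurableSet.compl
  have hslices : ∀ r, volume (Ico 0 1 \ covUnion M t ε r) =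
      volume.restrict (Ico (0 : ℝ) 1) (Prod.mk r ⁻¹' E) := fun r => by
    rw [Measure.restrict_apply' measurableSet_Ico, sdiff_eq_compl_inter]; rfl
  have hfibres : ∀ x, volume.restrict box ((·, x) ⁻¹' E) =
      ∏ m, ENNReal.ofReal (K * (1 - ε / t m)) := fun x => by
    rw [Measure.restrict_apply' (MeasurableSet.univ_pi fun _ => measurableSet_Ico)]
    exact volume_setOf_notMem_covUnion_inter_pi ht1 hε.le hεt x
  simp_rw [hslices]
  rw [integral_toReal_measure_prodMk_preimage _ _ hE]
  simp_rw [hfibres]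
  have hfactor_nonneg : ∀ m, 0 ≤ K * (1 - ε / t m) := fun m =>
    mul_nonneg hK.le (sub_nonneg.2 ((div_le_one (Nat.cast_pos.2 (ht1 m))).2 (hεt m)))
  rw [setLIntegral_const, Real.volume_Ico, sub_zero, ENNReal.ofReal_one, mul_one,
    ENNReal.toReal_prod, Finset.prod_congr rfl fun m _ => ENNReal.toReal_ofReal (hfactor_nonneg m),
    Finset.prod_mul_distrib, Finset.prod_const, Finset.card_univ, Fintype.card_fin]
  field_simp

theorem stmt11 (M : ℕ) (hM : 1 ≤ M) (t : Fin M → ℕ)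
    (ht : StrictMono t) (ht1 : ∀ m, 1 ≤ t m)
    (ε : ℝ) (hε : 0 < ε) (hεt : ∀ m, ε ≤ (t m : ℝ)) :
    (1 / (∏ m : Fin M, (t m : ℝ)) ^ M) *
      ∫ r : Fin M → ℝ in
        Set.univ.pi (fun _ : Fin M => Set.Ico (0:ℝ) (∏ m : Fin M, (t m : ℝ))),
        (volume (Set.Ico (0:ℝ) 1 \ covUnion M t ε r)).toReal =
      ∏ m : Fin M, (1 - ε / (t m : ℝ)) :=
  stmt11_general M t ht1 ε hε hεt
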